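/- If (x,y) is feasible for MFNLP, then the knapsack-cover inequalities hold: for every subset A ⊆ F with Σ_{i∈A} U_i ≤ |D|, one has Σ_{i∈F\A} min(U_i, |D| − Σ_{i∈A} U_i)·y_i ≥ |D| − Σ_{i∈A} U_i. -/

import Mathlib

/-!
Formalization of statements from "An LP-rounding approach to capacitated facility location".

`F` is the (finite) type of facilities, `D` the type of clients, `U i` the (positive integer)
capacity of facility `i`.  The multi-commodity flow network `MFN(g, x, y)` has nodes
`j^s, j^t` for clients `j` and `i, i'` for facilities `i`; its arcs and capacities are as in
`MFNArc` / `mfnCap` below.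
-/

open scoped BigOperators Classical

/-- Arcs of the multi-commodity flow network `MFN`:
`mid i` is the arc `(i, i')`, `sx j i` is `(j^s, i)`, `gs i j` is `(i, j^s)`,
and `ft i j` is `(i', j^t)`. -/
inductive MFNArc (F D : Type) where
  | mid : F → MFNArc F D
  | sx  : D → F → MFNArc F D
  | gs  : F → D → MFNArc F D
  | ft  : F → D → MFNArc F D
  deriving DecidableEq, Fintype

/-- Nodes of the multi-commodity flow network `MFN`. -/
inductive MFNNode (F D : Type) where
  | src  : D → MFNNode F D
  | fac  : F → MFNNode F D
  | fac' : F → MFNNode F D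
  | sink : D → MFNNode F D
  deriving DecidableEq

variable {F D : Type}

/-- Tail (start node) of an arc. -/
def MFNArc.tail : MFNArc F D → MFNNode F D
  | .mid i => .fac i
  | .sx j _ => .src j
  | .gs i _ => .fac i
  | .ft i _ => .fac' i

/-- Head (end node) of an arc. -/
def MFNArc.head : MFNArc F D → MFNNode F D
  | .mid i => .fac' i
  | .sx _ i => .fac i
  | .gs _ j => .src j
  | .ft _ j => .sink j

variable [Fintype F] [Fintype D]

/-- Capacity of each arc of `MFN(g, x, y)`; the demand of client `j` is
`d j = 1 - ∑ i, g i j`. -/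
noncomputable def mfnCap (U : F → ℕ) (g x : F → D → ℝ) (y : F → ℝ) : MFNArc F D → ℝ
  | .mid i  => y i * ((U i : ℝ) - ∑ j, g i j)
  | .sx j i => x i j
  | .gs i j => g i j
  | .ft i j => y i * (1 - ∑ i', g i' j)

/-- Net outflow of a (single-commodity) flow `f` at node `v`. -/
noncomputable def netOutflow (f : MFNArc F D → ℝ) (v : MFNNode F D) : ℝ :=
  ∑ a ∈ Finset.univ.filter (fun a : MFNArc F D => a.tail = v), f a -
    ∑ a ∈ Finset.univ.filter (fun a : MFNArc F D => a.head = v), f a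

/-- `f = (f_j)_{j ∈ D}` is a feasible multi-commodity flow for `MFN(g, x, y)`:
each `f_j` is nonnegative, conserves flow at every node other than `j^s` and `j^t`,
has net outflow `d j = 1 - ∑ i, g i j` at `j^s`, and the total flow on every arc is
at most its capacity. -/
def IsFeasibleFlow (U : F → ℕ) (g x : F → D → ℝ) (y : F → ℝ)
    (f : D → MFNArc F D → ℝ) : Prop :=
  (∀ j a, 0 ≤ f j a) ∧
  (∀ (j : D) (v : MFNNode F D), v ≠ MFNNode.src j → v ≠ MFNNode.sink j →
      netOutflow (f j) v = 0) ∧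
  (∀ j : D, netOutflow (f j) (MFNNode.src j) = 1 - ∑ i, g i j) ∧
  (∀ a : MFNArc F D, ∑ j, f j a ≤ mfnCap U g x y a)

/-- The multi-commodity flow network `MFN(g, x, y)` is feasible. -/
def MFNFeasible (U : F → ℕ) (g x : F → D → ℝ) (y : F → ℝ) : Prop :=
  ∃ f : D → MFNArc F D → ℝ, IsFeasibleFlow U g x y f

/-- `g` is a valid partial (fractional) assignment of clients to facilities. -/
def ValidAssign (U : F → ℕ) (g : F → D → ℝ) : Prop :=
  (∀ i j, 0 ≤ g i j) ∧ (∀ j, ∑ i, g i j ≤ 1) ∧ (∀ i, ∑ j, g i j ≤ (U i : ℝ))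

/-!
Spread every facility of `A` uniformly over the clients: `g i j = U i / |D|` for `i ∈ A` and
`g i j = 0` otherwise. This saturates the facilities of `A` and leaves every client the residual
demand `(|D| - ∑_{i ∈ A} U i) / |D|`, so a feasible flow of `MFN(g, x, y)` sends
`|D| - ∑_{i ∈ A} U i` units in total across the arcs `(i, i')`. Nothing crosses `(i, i')` for
`i ∈ A`, and for `i ∉ A` at most `y i * U i` (the capacity of `(i, i')`) and at most
`y i * (|D| - ∑_{i ∈ A} U i)` (the total capacity of the arcs `(i', j^t)`, which carry all
of it).
-/

open Finset

def MFNArc.equivSum : F ⊕ (D × F) ⊕ (F × D) ⊕ (F × D) ≃ MFNArc F D where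
  toFun s := match s with
    | .inl i => .mid i
    | .inr (.inl (j, i)) => .sx j i
    | .inr (.inr (.inl (i, j))) => .gs i j
    | .inr (.inr (.inr (i, j))) => .ft i j
  invFun a := match a with
    | .mid i => .inl i
    | .sx j i => .inr (.inl (j, i))
    | .gs i j => .inr (.inr (.inl (i, j)))
    | .ft i j => .inr (.inr (.inr (i, j)))
  left_inv := by rintro (i | ⟨j, i⟩ | ⟨i, j⟩ | ⟨i, j⟩) <;> rfl
  right_inv := by rintro (i | ⟨j, i⟩ | ⟨i, j⟩ | ⟨i, j⟩) <;> rfl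

theorem MFNArc.sum_univ {M : Type*} [AddCommMonoid M] (h : MFNArc F D → M) :
    ∑ a, h a = ∑ i, h (.mid i) + ∑ j, ∑ i, h (.sx j i) + ∑ i, ∑ j, h (.gs i j) +
      ∑ i, ∑ j, h (.ft i j) := by
  rw [← MFNArc.equivSum.sum_comp h]
  simp [Fintype.sum_sum_type, Fintype.sum_prod_type, MFNArc.equivSum, add_assoc]

section netOutflow

variable (f : MFNArc F D → ℝ)

theorem netOutflow_src (j : D) :
    netOutflow f (.src j) = ∑ i, f (.sx j i) - ∑ i, f (.gs i j) := by
  rw [netOutflow, sum_filter, sum_filter, MFNArc.sum_univ, MFNArc.sum_univ]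
  simp [MFNArc.tail, MFNArc.head]

theorem netOutflow_fac (i : F) :
    netOutflow f (.fac i) = f (.mid i) + ∑ j, f (.gs i j) - ∑ j, f (.sx j i) := by
  rw [netOutflow, sum_filter, sum_filter, MFNArc.sum_univ, MFNArc.sum_univ]
  simp [MFNArc.tail, MFNArc.head]

theorem netOutflow_fac' (i : F) :
    netOutflow f (.fac' i) = ∑ j, f (.ft i j) - f (.mid i) := by
  rw [netOutflow, sum_filter, sum_filter, MFNArc.sum_univ, MFNArc.sum_univ]
  simp [MFNArc.tail, MFNArc.head]

theorem netOutflow_sink (j : D) :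
    netOutflow f (.sink j) = -∑ i, f (.ft i j) := by
  rw [netOutflow, sum_filter, sum_filter, MFNArc.sum_univ, MFNArc.sum_univ]
  simp [MFNArc.tail, MFNArc.head]

theorem sum_netOutflow_eq_zero :
    ∑ j, netOutflow f (.src j) + ∑ i, netOutflow f (.fac i) + ∑ i, netOutflow f (.fac' i) +
      ∑ j, netOutflow f (.sink j) = 0 := by
  simp only [netOutflow_src, netOutflow_fac, netOutflow_fac', netOutflow_sink,
    sum_sub_distrib, sum_add_distrib, sum_neg_distrib]
  rw [sum_comm (f := fun j i => f (.sx j i)), sum_comm (f := fun i j => f (.gs i j)),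
    sum_comm (f := fun i j => f (.ft i j))]
  ring

end netOutflow

namespace IsFeasibleFlow

variable {U : F → ℕ} {g x : F → D → ℝ} {y : F → ℝ} {f : D → MFNArc F D → ℝ}
  (hf : IsFeasibleFlow U g x y f)
include hf

theorem sum_flow_into_own_sink (j : D) : ∑ i, f j (.ft i j) = 1 - ∑ i, g i j := by
  have conserve (v : MFNNode F D) (hs : v ≠ .src j) (ht : v ≠ .sink j) :
      netOutflow (f j) v = 0 := hf.2.1 j v hs ht
  have hsrc : ∑ j', netOutflow (f j) (.src j') = 1 - ∑ i, g i j := by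
    rw [sum_eq_single j (fun j' _ h => conserve _ (by simpa) (by simp)) (by simp)]
    exact hf.2.2.1 j
  have hfac : ∑ i, netOutflow (f j) (.fac i) = 0 :=
    sum_eq_zero fun i _ => conserve _ (by simp) (by simp)
  have hfac' : ∑ i, netOutflow (f j) (.fac' i) = 0 :=
    sum_eq_zero fun i _ => conserve _ (by simp) (by simp)
  have hsink : ∑ j', netOutflow (f j) (.sink j') = -∑ i, f j (.ft i j) := by
    rw [sum_eq_single j (fun j' _ h => conserve _ (by simp) (by simpa)) (by simp),
      netOutflow_sink]
  have := sum_netOutflow_eq_zero (f j)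
  rw [hsrc, hfac, hfac', hsink] at this
  linarith

theorem sum_flow_into_other_sink {j j' : D} (h : j' ≠ j) : ∑ i, f j' (.ft i j) = 0 := by
  have := hf.2.1 j' (.sink j) (by simp) (by simpa using h.symm)
  rw [netOutflow_sink] at this
  linarith

theorem sum_flow_into_sink (j : D) : ∑ j', ∑ i, f j' (.ft i j) = 1 - ∑ i, g i j := by
  rw [sum_eq_single j (fun j' _ h => hf.sum_flow_into_other_sink h) (by simp)]
  exact hf.sum_flow_into_own_sink j

theorem flow_mid_eq (j' : D) (i : F) : f j' (.mid i) = ∑ j, f j' (.ft i j) := by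
  have := hf.2.1 j' (.fac' i) (by simp) (by simp)
  rw [netOutflow_fac'] at this
  linarith

theorem sum_flow_mid :
    ∑ i, ∑ j', f j' (.mid i) = ∑ j, (1 - ∑ i, g i j) := by
  calc ∑ i, ∑ j', f j' (.mid i) = ∑ j, ∑ j', ∑ i, f j' (.ft i j) := by
        simp_rw [hf.flow_mid_eq]
        rw [sum_comm, eq_comm, sum_comm]
        exact sum_congr rfl fun _ _ => sum_comm
    _ = ∑ j, (1 - ∑ i, g i j) := sum_congr rfl fun j _ => hf.sum_flow_into_sink j

theorem sum_flow_mid_le_demand (i : F) :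
    ∑ j', f j' (.mid i) ≤ y i * ∑ j, (1 - ∑ i', g i' j) := by
  calc ∑ j', f j' (.mid i) = ∑ j, ∑ j', f j' (.ft i j) := by
        simp_rw [hf.flow_mid_eq]; exact sum_comm
    _ ≤ ∑ j, y i * (1 - ∑ i', g i' j) := sum_le_sum fun j _ => hf.2.2.2 (.ft i j)
    _ = y i * ∑ j, (1 - ∑ i', g i' j) := (mul_sum ..).symm

theorem sum_demand_le :
    ∑ j, (1 - ∑ i, g i j) ≤
      ∑ i, min (y i * (U i - ∑ j, g i j)) (y i * ∑ j, (1 - ∑ i', g i' j)) := by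
  calc ∑ j, (1 - ∑ i, g i j) = ∑ i, ∑ j', f j' (.mid i) := hf.sum_flow_mid.symm
    _ ≤ _ := sum_le_sum fun i _ => le_min (hf.2.2.2 (.mid i)) (hf.sum_flow_mid_le_demand i)

end IsFeasibleFlow

noncomputable def spreadAssign (U : F → ℕ) (A : Finset F) : F → D → ℝ :=
  fun i _ => if i ∈ A then U i / Fintype.card D else 0

section spreadAssign

variable (U : F → ℕ) (A : Finset F)

theorem sum_spreadAssign_facilities (j : D) :
    ∑ i, spreadAssign U A i j = (∑ i ∈ A, (U i : ℝ)) / Fintype.card D := by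
  simp [spreadAssign, sum_ite_mem, sum_div]

variable {U A}

omit [Fintype F] in
theorem sum_spreadAssign_clients (hD : Fintype.card D ≠ 0) (i : F) :
    ∑ j : D, spreadAssign U A i j = if i ∈ A then (U i : ℝ) else 0 := by
  have hN : (Fintype.card D : ℝ) ≠ 0 := Nat.cast_ne_zero.2 hD
  split_ifs with hi <;> simp [spreadAssign, hi, mul_div_cancel₀ _ hN]

theorem sum_demand_spreadAssign (hD : Fintype.card D ≠ 0) :
    ∑ j : D, (1 - ∑ i, spreadAssign U A i j) = Fintype.card D - ∑ i ∈ A, (U i : ℝ) := by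
  have hN : (Fintype.card D : ℝ) ≠ 0 := Nat.cast_ne_zero.2 hD
  simp [sum_spreadAssign_facilities, mul_div_cancel₀ _ hN]

theorem validAssign_spreadAssign (hD : Fintype.card D ≠ 0)
    (hA : ∑ i ∈ A, (U i : ℝ) ≤ Fintype.card D) :
    ValidAssign U (spreadAssign (D := D) U A) := by
  refine ⟨fun i j => ?_, fun j => ?_, fun i => ?_⟩
  · unfold spreadAssign
    split_ifs <;> positivity
  · rw [sum_spreadAssign_facilities]
    exact div_le_one_of_le₀ hA (Nat.cast_nonneg _)
  · rw [sum_spreadAssign_clients hD]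
    split_ifs <;> simp

end spreadAssign

theorem min_mul_le_min_mul (a b c : ℝ) : min (c * a) (c * b) ≤ min a b * c := by
  rcases min_choice a b with h | h <;> rw [h, mul_comm _ c]
  exacts [min_le_left _ _, min_le_right _ _]

theorem stmt_5_general (U : F → ℕ)
    (x : F → D → ℝ) (y : F → ℝ)
    (hfeas : ∀ g : F → D → ℝ, ValidAssign U g → MFNFeasible U g x y)
    (A : Finset F) (hA : ∑ i ∈ A, U i ≤ Fintype.card D) :
    (Fintype.card D : ℝ) - ∑ i ∈ A, (U i : ℝ) ≤
      ∑ i ∈ Finset.univ \ A,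
        min (U i : ℝ) ((Fintype.card D : ℝ) - ∑ i' ∈ A, (U i' : ℝ)) * y i := by
  have hA' : ∑ i ∈ A, (U i : ℝ) ≤ Fintype.card D := by exact_mod_cast hA
  rcases eq_or_ne (Fintype.card D) 0 with hD | hD
  · have : (Fintype.card D : ℝ) - ∑ i ∈ A, (U i : ℝ) = 0 := by
      rw [hD, Nat.cast_zero] at hA' ⊢
      linarith [sum_nonneg fun i (_ : i ∈ A) => (U i).cast_nonneg (α := ℝ)]
    simp [this]
  obtain ⟨f, hf⟩ := hfeas _ (validAssign_spreadAssign hD hA')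
  calc (Fintype.card D : ℝ) - ∑ i ∈ A, (U i : ℝ)
        = ∑ j, (1 - ∑ i, spreadAssign U A i j) := (sum_demand_spreadAssign hD).symm
    _ ≤ _ := hf.sum_demand_le
    _ ≤ _ := by
      rw [← sum_sdiff (subset_univ A)]
      refine add_le_of_le_of_nonpos (sum_le_sum fun i hi => ?_) (sum_nonpos fun i hi => ?_)
      · rw [sum_spreadAssign_clients hD, if_neg (mem_sdiff.1 hi).2, sub_zero,
          sum_demand_spreadAssign hD]
        exact min_mul_le_min_mul _ _ _
      · rw [sum_spreadAssign_clients hD, if_pos hi, sub_self, mul_zero]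
        exact min_le_left _ _

/-- Feasibility for MFNLP implies all knapsack-cover inequalities. -/
theorem stmt_5 (U : F → ℕ) (hU : ∀ i, 0 < U i)
    (x : F → D → ℝ) (y : F → ℝ)
    (hx : ∀ i j, 0 ≤ x i j ∧ x i j ≤ 1) (hy : ∀ i, 0 ≤ y i ∧ y i ≤ 1)
    (hfeas : ∀ g : F → D → ℝ, ValidAssign U g → MFNFeasible U g x y)
    (A : Finset F) (hA : ∑ i ∈ A, U i ≤ Fintype.card D) :
    (Fintype.card D : ℝ) - ∑ i ∈ A, (U i : ℝ) ≤
      ∑ i ∈ Finset.univ \ A,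
        min (U i : ℝ) ((Fintype.card D : ℝ) - ∑ i' ∈ A, (U i' : ℝ)) * y i :=
  stmt_5_general U x y hfeas A hA
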